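/- arXiv:1312.2572 — 6 statements merged into one kernel-verified Lean document; each statement's English description precedes it below -/
import Mathlib

section
/- Let 𝔩 be a nonzero prime of O_K that is inert in L/K, write 𝔏 := 𝔩O_L. Assume a, b, c, d ∈ L satisfy ν_𝔏(a), ν_𝔏(b), ν_𝔏(c) ≥ 0 and ν_𝔏(d) = 0, and that the residues of a/d, b/d, c/d in O_L/𝔏 do not lie in the subfield O_K/𝔩. If moreover a ≡ b (mod 𝔏), then the cubic surface S defined by T0T1T2 = N_{L/K}(aT0 + bT1 + cT2 + dT3) has a K_𝔩-rational point. -/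
/-!
On the line `(1, -1, T, 0)` the equation of the surface reads `-T = q(T)`, where
`q(T) = P(1, -1, T, 0) = ∏_σ (σ(a - b) + σ(c) T)`. As `𝔏 = 𝔩 O_L` is unramified over `𝔩` and
stable under `Gal(L/K)`, the valuation `ν_𝔏` restricts to `ν_𝔩` on `K` and is Galois invariant;
hence every `σ(a - b)` lies in `𝔏` and every `σ(c)` is integral. With at least two factors, the
constant and linear coefficients of `q` therefore lie in `𝔩` and all others are integral, so
`T ↦ -q(T)` is a contraction of a closed ball of radius `< 1` in `K_𝔩`. Its fixed point `ξ`
gives the point `(1, -1, ξ, 0)`.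
-/

namespace IsDedekindDomain.HeightOneSpectrum

variable {A B : Type*} [CommRing A] [IsDedekindDomain A] [CommRing B] [IsDedekindDomain B]
  {v : HeightOneSpectrum A} {w : HeightOneSpectrum B}

theorem intValuation_map_of_asIdeal_eq_map {φ : A →+* B} (hφ : Function.Injective φ)
    (hw : w.asIdeal = Ideal.map φ v.asIdeal) (x : A) :
    w.intValuation (φ x) = v.intValuation x := by
  let := φ.toAlgebra
  have : FaithfulSMul A B := (faithfulSMul_iff_algebraMap_injective A B).mpr hφ
  have : w.asIdeal.LiesOver v.asIdeal :=
    ⟨v.isMaximal.eq_of_le (Ideal.IsPrime.comap _).ne_top (hw ▸ Ideal.le_comap_map)⟩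
  have he : v.asIdeal.ramificationIdx' w.asIdeal = 1 := by
    rw [hw]
    exact Ideal.ramificationIdx'_map_self_eq_one (hw ▸ w.isPrime.ne_top) (hw ▸ w.ne_bot)
  have h := intValuation_liesOver v w x
  rw [he, pow_one] at h
  exact h.symm

theorem valuation_map_of_asIdeal_eq_map {K L : Type*} [Field K] [Algebra A K] [IsFractionRing A K]
    [Field L] [Algebra B L] [IsFractionRing B L] {φ : A →+* B} (hφ : Function.Injective φ)
    (hw : w.asIdeal = Ideal.map φ v.asIdeal) {Φ : K →+* L}
    (hΦ : ∀ x, Φ (algebraMap A K x) = algebraMap B L (φ x)) (u : K) :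
    w.valuation L (Φ u) = v.valuation K u := by
  obtain ⟨x, y, -, rfl⟩ := IsFractionRing.div_surjective (A := A) u
  simp only [map_div₀, hΦ, valuation_of_algebraMap, intValuation_map_of_asIdeal_eq_map hφ hw]

end IsDedekindDomain.HeightOneSpectrum

open NumberField IsDedekindDomain

namespace NumberField

variable {K L : Type*} [Field K] [NumberField K] [Field L] [NumberField L] [Algebra K L]
  {v : HeightOneSpectrum (𝓞 K)} {w : HeightOneSpectrum (𝓞 L)}

theorem valuation_algebraMap_of_asIdeal_eq_map
    (hw : w.asIdeal = Ideal.map (algebraMap (𝓞 K) (𝓞 L)) v.asIdeal) (k : K) :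
    w.valuation L (algebraMap K L k) = v.valuation K k :=
  HeightOneSpectrum.valuation_map_of_asIdeal_eq_map (FaithfulSMul.algebraMap_injective _ _) hw
    (fun x ↦ by simp only [← IsScalarTower.algebraMap_apply]) k

theorem valuation_algEquiv_apply_of_asIdeal_eq_map
    (hw : w.asIdeal = Ideal.map (algebraMap (𝓞 K) (𝓞 L)) v.asIdeal) (σ : L ≃ₐ[K] L) (u : L) :
    w.valuation L (σ u) = w.valuation L u := by
  let e := galRestrict (𝓞 K) K L (𝓞 L) σ
  refine HeightOneSpectrum.valuation_map_of_asIdeal_eq_map (φ := e.toRingHom) e.injective ?_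
    (Φ := σ.toRingHom) (fun x ↦ (algebraMap_galRestrict_apply (𝓞 K) σ x).symm) u
  rw [hw, Ideal.map_map]
  congr 1
  exact RingHom.ext fun x ↦ (e.commutes x).symm

theorem norm_algebraMap_adicCompletion_le_one_iff (k : K) :
    ‖algebraMap K (v.adicCompletion K) k‖ ≤ 1 ↔ v.valuation K k ≤ 1 := by
  rw [Valued.toNormedField.norm_le_one_iff, ← HeightOneSpectrum.valuedAdicCompletion_eq_valuation']
  rfl

theorem norm_algebraMap_adicCompletion_lt_one_iff (k : K) :
    ‖algebraMap K (v.adicCompletion K) k‖ < 1 ↔ v.valuation K k < 1 := by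
  rw [Valued.toNormedField.norm_lt_one_iff, ← HeightOneSpectrum.valuedAdicCompletion_eq_valuation']
  rfl

end NumberField

section NormedRing

variable {F : Type*} [NormedRing F] [IsUltrametricDist F]

theorem norm_pow_succ_sub_pow_succ_le {x y : F} {r : ℝ} (hx : ‖x‖ ≤ r) (hy : ‖y‖ ≤ r)
    (n : ℕ) : ‖x ^ (n + 1) - y ^ (n + 1)‖ ≤ r ^ n * ‖x - y‖ := by
  have hr : 0 ≤ r := (norm_nonneg x).trans hx
  induction n with
  | zero => simp
  | succ n ih =>
    have hsplit : x ^ (n + 2) - y ^ (n + 2) =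
        x * (x ^ (n + 1) - y ^ (n + 1)) + (x - y) * y ^ (n + 1) := by
      rw [pow_succ' x (n + 1), pow_succ' y (n + 1)]
      noncomm_ring
    rw [hsplit]
    refine (IsUltrametricDist.norm_add_le_max _ _).trans (max_le ?_ ?_)
    · calc ‖x * (x ^ (n + 1) - y ^ (n + 1))‖ ≤ r * (r ^ n * ‖x - y‖) :=
            (norm_mul_le _ _).trans (mul_le_mul hx ih (norm_nonneg _) hr)
        _ = r ^ (n + 1) * ‖x - y‖ := by ring
    · calc ‖(x - y) * y ^ (n + 1)‖ ≤ ‖x - y‖ * r ^ (n + 1) :=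
            (norm_mul_le _ _).trans (mul_le_mul_of_nonneg_left
              ((norm_pow_le' y n.succ_pos).trans (pow_le_pow_left₀ (norm_nonneg y) hy _))
              (norm_nonneg _))
        _ = r ^ (n + 1) * ‖x - y‖ := mul_comm _ _

end NormedRing

namespace Polynomial

section Valuation

variable {R Γ₀ : Type*} [CommRing R] [LinearOrderedCommMonoidWithZero Γ₀] (ν : Valuation R Γ₀)

theorem valuation_coeff_C_add_C_mul_X_le_one {α γ : R} (hα : ν α ≤ 1) (hγ : ν γ ≤ 1) (n : ℕ) :
    ν ((C α + C γ * X).coeff n) ≤ 1 := by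
  rcases n with _ | _ | n <;> simp [coeff_X, coeff_C, hα, hγ]

theorem valuation_coeff_prod_le_one {ι : Type*} (s : Finset ι) {f : ι → R[X]}
    (hf : ∀ i ∈ s, ∀ n, ν ((f i).coeff n) ≤ 1) (n : ℕ) :
    ν ((∏ i ∈ s, f i).coeff n) ≤ 1 := by
  refine Finset.prod_induction f (fun p ↦ ∀ n, ν (p.coeff n) ≤ 1) (fun p q hp hq n ↦ ?_)
    (fun n ↦ ?_) hf n
  · rw [coeff_mul]
    exact ν.map_sum_le fun x _ ↦ by rw [map_mul]; exact mul_le_one' (hp _) (hq _)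
  · rw [coeff_one]
    split_ifs <;> simp

theorem valuation_coeff_zero_prod_lt_one {ι : Type*} {s : Finset ι} (hs : s.Nonempty)
    {f : ι → R[X]} (hf : ∀ i ∈ s, ν ((f i).coeff 0) < 1) :
    ν ((∏ i ∈ s, f i).coeff 0) < 1 := by
  classical
  obtain ⟨i, hi⟩ := hs
  rw [coeff_zero_prod, map_prod, ← Finset.mul_prod_erase s _ hi]
  refine (mul_le_of_le_one_right' (Finset.prod_le_one' fun j hj ↦ ?_)).trans_lt (hf i hi)
  exact (hf j (Finset.mem_of_mem_erase hj)).le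

theorem valuation_coeff_one_mul_lt_one {p q : R[X]} (hp : ∀ n, ν (p.coeff n) ≤ 1)
    (hq : ∀ n, ν (q.coeff n) ≤ 1) (hp₀ : ν (p.coeff 0) < 1) (hq₀ : ν (q.coeff 0) < 1) :
    ν ((p * q).coeff 1) < 1 := by
  rw [mul_coeff_one]
  refine ν.map_add_lt ?_ ?_ <;> rw [map_mul]
  exacts [(mul_le_of_le_one_right' (hq 1)).trans_lt hp₀,
    (mul_le_of_le_one_left' (hp 1)).trans_lt hq₀]

theorem valuation_coeff_one_prod_lt_one {ι : Type*} {s : Finset ι} (hs : 1 < s.card)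
    {f : ι → R[X]} (hf : ∀ i ∈ s, ∀ n, ν ((f i).coeff n) ≤ 1)
    (hf₀ : ∀ i ∈ s, ν ((f i).coeff 0) < 1) :
    ν ((∏ i ∈ s, f i).coeff 1) < 1 := by
  classical
  obtain ⟨i, hi⟩ := Finset.card_pos.mp (zero_lt_one.trans hs)
  have hrest : (s.erase i).Nonempty := by
    rw [← Finset.card_pos, Finset.card_erase_of_mem hi]
    omega
  rw [← Finset.mul_prod_erase s f hi]
  exact valuation_coeff_one_mul_lt_one ν (hf i hi)
    (valuation_coeff_prod_le_one ν _ fun j hj ↦ hf j (Finset.mem_of_mem_erase hj)) (hf₀ i hi)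
    (valuation_coeff_zero_prod_lt_one ν hrest fun j hj ↦ hf₀ j (Finset.mem_of_mem_erase hj))

end Valuation

section Ultrametric

variable {F : Type*} [NormedRing F] [IsUltrametricDist F]

theorem norm_eval_sub_eval_le {p : F[X]} {r : ℝ} (hr : r ≤ 1) (hp : ∀ n, ‖p.coeff n‖ ≤ 1)
    (hp₁ : ‖p.coeff 1‖ ≤ r) {x y : F} (hx : ‖x‖ ≤ r) (hy : ‖y‖ ≤ r) :
    ‖p.eval x - p.eval y‖ ≤ r * ‖x - y‖ := by
  have hr₀ : 0 ≤ r := (norm_nonneg x).trans hx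
  rw [eval_eq_sum_range, eval_eq_sum_range, ← Finset.sum_sub_distrib]
  refine IsUltrametricDist.norm_sum_le_of_forall_le_of_nonneg (by positivity) fun n _ ↦ ?_
  rw [← mul_sub]
  refine (norm_mul_le _ _).trans ?_
  rcases n with _ | _ | n
  · simp only [pow_zero, sub_self, norm_zero, mul_zero]
    positivity
  · simpa using mul_le_mul_of_nonneg_right hp₁ (norm_nonneg (x - y))
  · calc ‖p.coeff (n + 2)‖ * ‖x ^ (n + 2) - y ^ (n + 2)‖ ≤ 1 * (r ^ (n + 1) * ‖x - y‖) :=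
          mul_le_mul (hp _) (norm_pow_succ_sub_pow_succ_le hx hy _) (norm_nonneg _) zero_le_one
      _ ≤ r * ‖x - y‖ := by
          rw [one_mul]
          exact mul_le_mul_of_nonneg_right (pow_le_of_le_one hr₀ hr n.succ_ne_zero) (norm_nonneg _)

theorem exists_eval_eq_self [CompleteSpace F] {p : F[X]} (hp : ∀ n, ‖p.coeff n‖ ≤ 1)
    (hp₀ : ‖p.coeff 0‖ < 1) (hp₁ : ‖p.coeff 1‖ < 1) : ∃ x, p.eval x = x := by
  set r := max ‖p.coeff 0‖ ‖p.coeff 1‖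
  have hr₀ : 0 ≤ r := (norm_nonneg _).trans (le_max_left _ _)
  have hr₁ : r < 1 := max_lt hp₀ hp₁
  have hlip {x y : F} (hx : ‖x‖ ≤ r) (hy : ‖y‖ ≤ r) : ‖p.eval x - p.eval y‖ ≤ r * ‖x - y‖ :=
    norm_eval_sub_eval_le hr₁.le hp (le_max_right _ _) hx hy
  have hmaps : Set.MapsTo p.eval (Metric.closedBall 0 r) (Metric.closedBall 0 r) := by
    intro x hx
    simp only [mem_closedBall_zero_iff] at hx ⊢
    rw [← sub_add_cancel (p.eval x) (p.eval 0)]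
    refine (IsUltrametricDist.norm_add_le_max _ _).trans (max_le ?_ ?_)
    · calc ‖p.eval x - p.eval 0‖ ≤ r * ‖x - 0‖ := hlip hx (by simpa using hr₀)
        _ ≤ r * 1 := by
          rw [sub_zero]
          exact mul_le_mul_of_nonneg_left (hx.trans hr₁.le) hr₀
        _ = r := mul_one r
    · rw [← coeff_zero_eq_eval_zero]
      exact le_max_left _ _
  have hcontr : ContractingWith r.toNNReal (hmaps.restrict p.eval _ _) := by
    refine ⟨by simpa using hr₁, LipschitzWith.of_dist_le_mul fun x y ↦ ?_⟩
    simpa [Subtype.dist_eq, dist_eq_norm, Real.coe_toNNReal _ hr₀] using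
      hlip (mem_closedBall_zero_iff.mp x.2) (mem_closedBall_zero_iff.mp y.2)
  obtain ⟨x, -, hx, -⟩ := hcontr.exists_fixedPoint' Metric.isClosed_closedBall.isComplete hmaps
    (Metric.mem_closedBall_self hr₀) (edist_ne_top _ _)
  exact ⟨x, hx⟩

end Ultrametric

end Polynomial

open MvPolynomial


section NormForm

variable {K : Type*} [Field K]

theorem aeval_one_neg_one_eq_polynomial_aeval {A : Type*} [CommRing A] [Algebra K A]
    (P : MvPolynomial (Fin 4) K) (ξ : A) :
    aeval ![1, -1, ξ, 0] P = Polynomial.aeval ξ (aeval ![1, -1, Polynomial.X (R := K), 0] P) := by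
  rw [← AlgHom.comp_apply, MvPolynomial.comp_aeval]
  congr 2
  funext i
  fin_cases i <;> simp

theorem map_aeval_one_neg_one_eq_prod {L : Type*} [Field L] [Algebra K L] [FiniteDimensional K L]
    {a b c d : L} {P : MvPolynomial (Fin 4) K}
    (hP : MvPolynomial.map (algebraMap K L) P =
      ∏ σ : L ≃ₐ[K] L, (C (σ a) * X 0 + C (σ b) * X 1 + C (σ c) * X 2 + C (σ d) * X 3)) :
    (aeval ![1, -1, Polynomial.X, 0] P).map (algebraMap K L) =
      ∏ σ : L ≃ₐ[K] L, (Polynomial.C (σ a - σ b) + Polynomial.C (σ c) * Polynomial.X) := by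
  change Polynomial.mapAlgHom (Algebra.ofId K L) _ = _
  rw [← AlgHom.comp_apply, MvPolynomial.comp_aeval,
    ← MvPolynomial.aeval_map_algebraMap L, hP, map_prod]
  refine Finset.prod_congr rfl fun σ _ ↦ ?_
  simp [sub_eq_add_neg]

end NormForm

theorem inert_prime_local_solubility_of_congruent_general
    {K : Type*} [Field K] [NumberField K]
    {L : Type*} [Field L] [NumberField L] [Algebra K L] [IsGalois K L]
    [FiniteDimensional K L] (hdeg : Module.finrank K L = 3)
    (v : HeightOneSpectrum (𝓞 K)) (w : HeightOneSpectrum (𝓞 L))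
    -- v is inert in L/K and w = 𝔩 O_L is the unique prime above it
    (hw : w.asIdeal = Ideal.map (algebraMap (𝓞 K) (𝓞 L)) v.asIdeal)
    (a b c d : L)
    (hc : w.valuation L c ≤ 1)
    -- a ≡ b (mod 𝔏)
    (hab : w.valuation L (a - b) < 1)
    -- P is the norm form N_{L/K}(aT0 + bT1 + cT2 + dT3), a cubic form over K
    (P : MvPolynomial (Fin 4) K)
    (hP : MvPolynomial.map (algebraMap K L) P =
      ∏ σ : L ≃ₐ[K] L, (C (σ a) * X 0 + C (σ b) * X 1 + C (σ c) * X 2 + C (σ d) * X 3)) :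
    ∃ t : Fin 4 → v.adicCompletion K, t ≠ 0 ∧ t 0 * t 1 * t 2 = aeval t P := by
  set q : Polynomial K := aeval ![1, -1, Polynomial.X, 0] P
  set g : (L ≃ₐ[K] L) → Polynomial L :=
    fun σ ↦ Polynomial.C (σ a - σ b) + Polynomial.C (σ c) * Polynomial.X
  have hg : ∀ σ ∈ Finset.univ, ∀ n, w.valuation L ((g σ).coeff n) ≤ 1 := fun σ _ ↦
    Polynomial.valuation_coeff_C_add_C_mul_X_le_one _
      (by rw [← map_sub, valuation_algEquiv_apply_of_asIdeal_eq_map hw]; exact hab.le)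
      (by rwa [valuation_algEquiv_apply_of_asIdeal_eq_map hw])
  have hg₀ : ∀ σ ∈ Finset.univ, w.valuation L ((g σ).coeff 0) < 1 := fun σ _ ↦ by
    simpa [g, ← map_sub, valuation_algEquiv_apply_of_asIdeal_eq_map hw] using hab
  have hcard : 1 < (Finset.univ : Finset (L ≃ₐ[K] L)).card := by
    rw [Finset.card_univ, Fintype.card_eq_nat_card, IsGalois.card_aut_eq_finrank, hdeg]
    norm_num
  have hq (n : ℕ) : v.valuation K (q.coeff n) = w.valuation L ((∏ σ, g σ).coeff n) := by
    rw [← map_aeval_one_neg_one_eq_prod hP, Polynomial.coeff_map,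
      valuation_algebraMap_of_asIdeal_eq_map hw]
  have hfix := Polynomial.exists_eval_eq_self (p := -q.map (algebraMap K (v.adicCompletion K)))
  simp only [Polynomial.coeff_neg, norm_neg, Polynomial.coeff_map, hq,
    norm_algebraMap_adicCompletion_le_one_iff, norm_algebraMap_adicCompletion_lt_one_iff] at hfix
  obtain ⟨ξ, hξ⟩ := hfix (Polynomial.valuation_coeff_prod_le_one _ _ hg)
    (Polynomial.valuation_coeff_zero_prod_lt_one _ Finset.univ_nonempty hg₀)
    (Polynomial.valuation_coeff_one_prod_lt_one _ hcard hg hg₀)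
  refine ⟨![1, -1, ξ, 0], fun h ↦ one_ne_zero (congrFun h 0), ?_⟩
  rw [Polynomial.eval_neg, neg_eq_iff_eq_neg, Polynomial.eval_map, ← Polynomial.aeval_def] at hξ
  rw [aeval_one_neg_one_eq_polynomial_aeval, hξ]
  simp

/-- **Proposition (inert primes, part a.i).**  Let `𝔩 = v` be a prime of `O_K` that is inert in
the cyclic cubic extension `L/K`, with `𝔏 = w` the prime `𝔩 O_L` of `O_L`, and write
`ℓ = #(O_K/𝔩)`.  Assume `a, b, c, d ∈ L` are `𝔏`-integral, `d` is a `𝔏`-adic unit, and the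
residues of `a/d`, `b/d`, `c/d` in `O_L/𝔏` do not lie in the subfield `O_K/𝔩`.  If moreover `a ≡ b (mod 𝔏)`,
then the cubic surface `T0T1T2 = N_{L/K}(aT0 + bT1 + cT2 + dT3)` (with defining norm form
`P` over `K`) has a `K_𝔩`-rational point. -/
theorem inert_prime_local_solubility_of_congruent
    {K : Type*} [Field K] [NumberField K]
    {L : Type*} [Field L] [NumberField L] [Algebra K L] [IsGalois K L]
    [FiniteDimensional K L] (hdeg : Module.finrank K L = 3)
    (v : HeightOneSpectrum (𝓞 K)) (w : HeightOneSpectrum (𝓞 L))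
    -- v is inert in L/K and w = 𝔩 O_L is the unique prime above it
    (hw : w.asIdeal = Ideal.map (algebraMap (𝓞 K) (𝓞 L)) v.asIdeal)
    (a b c d : L)
    -- a, b, c are integral at w and d is a unit at w
    (ha : w.valuation L a ≤ 1) (hb : w.valuation L b ≤ 1) (hc : w.valuation L c ≤ 1)
    (hd : w.valuation L d = 1)
    -- the residues of a/d, b/d, c/d in O_L/𝔏 do not lie in the subfield O_K/𝔩
    (hres : ∀ u ∈ ({a, b, c} : Set L), ¬∃ x : 𝓞 K,
      w.valuation L (u / d - algebraMap K L (algebraMap (𝓞 K) K x)) < 1)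
    -- a ≡ b (mod 𝔏)
    (hab : w.valuation L (a - b) < 1)
    -- P is the norm form N_{L/K}(aT0 + bT1 + cT2 + dT3), a cubic form over K
    (P : MvPolynomial (Fin 4) K)
    (hP : MvPolynomial.map (algebraMap K L) P =
      ∏ σ : L ≃ₐ[K] L, (C (σ a) * X 0 + C (σ b) * X 1 + C (σ c) * X 2 + C (σ d) * X 3)) :
    ∃ t : Fin 4 → v.adicCompletion K, t ≠ 0 ∧ t 0 * t 1 * t 2 = aeval t P :=
  inert_prime_local_solubility_of_congruent_general hdeg v w hw a b c d hc hab P hP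
end

section
/- Let K be a field and let l0, l1, l2, l0', l1', l2' ∈ K[T0, T1, T2, T3] be nonzero linear forms such that l_i is not a scalar multiple of l_j' for any 0 ≤ i, j ≤ 2. Set F := l0·l1·l2 − l0'·l1'·l2'. If x ∈ K⁴ is nonzero, F(x) = 0, all four partial derivatives ∂F/∂T_k vanish at x, and l0(x) = 0, then at least two of the values l0(x), l1(x), l2(x) are zero and at least two of the values l0'(x), l1'(x), l2'(x) are zero. -/
/-! Since `l0(x) = 0` and `F(x) = 0`, some `l'_j(x)` vanishes as well. The product rule then shows
that the gradient of `F` at `x` is `(l1 l2)(x) · l0 - (∏_{j' ≠ j} l'_{j'})(x) · l'_j`; as `l0` and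
`l'_j` are not proportional, both coefficients vanish, which gives a second zero in each triple. -/

open MvPolynomial Finset

theorem eq_zero_and_eq_zero_of_smul_eq_smul {K M : Type*} [Field K] [AddCommGroup M] [Module K M]
    {a b : M} (hb : b ≠ 0) (hab : ∀ γ : K, a ≠ γ • b) {A B : K} (h : A • a = B • b) :
    A = 0 ∧ B = 0 := by
  have hA : A = 0 := by
    by_contra hA
    apply hab (A⁻¹ * B)
    rw [mul_smul, ← h, smul_smul, inv_mul_cancel₀ hA, one_smul]
  refine ⟨hA, ?_⟩
  rw [hA, zero_smul, eq_comm, smul_eq_zero] at h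
  exact h.resolve_right hb

theorem exists_ne_of_eq_zero_of_prod_erase_eq_zero {ι M : Type*} [DecidableEq ι] [Fintype ι]
    [CommMonoidWithZero M] [NoZeroDivisors M] [Nontrivial M] {v : ι → M} {i : ι} (hi : v i = 0)
    (h : ∏ j ∈ univ.erase i, v j = 0) : ∃ i₁ i₂ : ι, i₁ ≠ i₂ ∧ v i₁ = 0 ∧ v i₂ = 0 := by
  obtain ⟨j, hj, hvj⟩ := prod_eq_zero_iff.mp h
  exact ⟨i, j, (ne_of_mem_erase hj).symm, hi, hvj⟩

namespace MvPolynomial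

variable {R σ : Type*} [CommRing R]

theorem eval_pderiv_prod_of_eval_eq_zero {ι : Type*} [DecidableEq ι] (f : ι → MvPolynomial σ R)
    {s : Finset ι} {i : ι} (hi : i ∈ s) (x : σ → R) (hfi : eval x (f i) = 0) (k : σ) :
    eval x (pderiv k (∏ j ∈ s, f j)) = eval x (pderiv k (f i)) * ∏ j ∈ s.erase i, eval x (f j) := by
  rw [← mul_prod_erase s f hi, pderiv_mul, map_add, map_mul, map_mul, hfi, zero_mul, add_zero,
    map_prod]

variable [Fintype σ]

theorem eval_sum_C_mul_X (c x : σ → R) : eval x (∑ m, C (c m) * X m) = c ⬝ᵥ x := by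
  simp [dotProduct]

theorem pderiv_sum_C_mul_X (c : σ → R) (k : σ) : pderiv k (∑ m, C (c m) * X m) = C (c k) := by
  classical
  simp [pderiv_X, Pi.single_apply]

end MvPolynomial

theorem singular_point_on_two_planes_general
    {K : Type*} [Field K]
    (l l' : Fin 3 → Fin 4 → K)
    (hl' : ∀ j, l' j ≠ 0)
    (hnp : ∀ i j, ∀ γ : K, l i ≠ γ • l' j)
    (F : MvPolynomial (Fin 4) K)
    (hF : F = (∏ i : Fin 3, ∑ k : Fin 4, C (l i k) * X k)
            - ∏ j : Fin 3, ∑ k : Fin 4, C (l' j k) * X k)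
    (x : Fin 4 → K)
    (hFx : eval x F = 0)
    (hsing : ∀ k : Fin 4, eval x (pderiv k F) = 0)
    (hl0 : ∑ k, l 0 k * x k = 0) :
    (∃ i₁ i₂ : Fin 3, i₁ ≠ i₂ ∧ (∑ k, l i₁ k * x k) = 0 ∧ (∑ k, l i₂ k * x k) = 0) ∧
    (∃ j₁ j₂ : Fin 3, j₁ ≠ j₂ ∧ (∑ k, l' j₁ k * x k) = 0 ∧ (∑ k, l' j₂ k * x k) = 0) := by
  replace hl0 : l 0 ⬝ᵥ x = 0 := hl0
  obtain ⟨j, -, hj⟩ : ∃ j ∈ univ, l' j ⬝ᵥ x = 0 := by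
    rw [hF, map_sub, map_prod, map_prod, prod_eq_zero (mem_univ 0) (by rwa [eval_sum_C_mul_X]),
      zero_sub, neg_eq_zero, prod_eq_zero_iff] at hFx
    simpa only [eval_sum_C_mul_X] using hFx
  have hgrad : (∏ i ∈ univ.erase 0, l i ⬝ᵥ x) • l 0 = (∏ i ∈ univ.erase j, l' i ⬝ᵥ x) • l' j := by
    funext k
    have hk := hsing k
    rw [hF, map_sub, map_sub,
      eval_pderiv_prod_of_eval_eq_zero (fun i ↦ ∑ m, C (l i m) * X m) (mem_univ 0) x
        (by rwa [eval_sum_C_mul_X]),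
      eval_pderiv_prod_of_eval_eq_zero (fun i ↦ ∑ m, C (l' i m) * X m) (mem_univ j) x
        (by rwa [eval_sum_C_mul_X])] at hk
    simp only [pderiv_sum_C_mul_X, eval_C, eval_sum_C_mul_X] at hk
    simp only [Pi.smul_apply, smul_eq_mul]
    linear_combination hk
  obtain ⟨hl_rest, hl'_rest⟩ := eq_zero_and_eq_zero_of_smul_eq_smul (hl' j) (hnp 0 j) hgrad
  exact ⟨exists_ne_of_eq_zero_of_prod_erase_eq_zero hl0 hl_rest,
    exists_ne_of_eq_zero_of_prod_erase_eq_zero hj hl'_rest⟩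

/-- **Lemma (singular points of `l0·l1·l2 = l0'·l1'·l2'`).**  Let `K` be a field and let
`l 0, l 1, l 2, l' 0, l' 1, l' 2` be nonzero linear forms in four variables (given by their
coefficient vectors) such that no `l i` is a scalar multiple of any `l' j`.  Set
`F = l0·l1·l2 − l0'·l1'·l2'`.  If `x ≠ 0`, `F(x) = 0`, all four partial derivatives of `F`
vanish at `x`, and `l0(x) = 0`, then at least two of `l0(x), l1(x), l2(x)` vanish
and at least two of `l0'(x), l1'(x), l2'(x)` vanish. -/
theorem singular_point_on_two_planes
    {K : Type*} [Field K]
    (l l' : Fin 3 → Fin 4 → K)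
    (hl : ∀ i, l i ≠ 0) (hl' : ∀ j, l' j ≠ 0)
    (hnp : ∀ i j, ∀ γ : K, l i ≠ γ • l' j)
    (F : MvPolynomial (Fin 4) K)
    (hF : F = (∏ i : Fin 3, ∑ k : Fin 4, C (l i k) * X k)
            - ∏ j : Fin 3, ∑ k : Fin 4, C (l' j k) * X k)
    (x : Fin 4 → K) (hx : x ≠ 0)
    (hFx : eval x F = 0)
    (hsing : ∀ k : Fin 4, eval x (pderiv k F) = 0)
    (hl0 : ∑ k, l 0 k * x k = 0) :
    (∃ i₁ i₂ : Fin 3, i₁ ≠ i₂ ∧ (∑ k, l i₁ k * x k) = 0 ∧ (∑ k, l i₂ k * x k) = 0) ∧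
    (∃ j₁ j₂ : Fin 3, j₁ ≠ j₂ ∧ (∑ k, l' j₁ k * x k) = 0 ∧ (∑ k, l' j₂ k * x k) = 0) :=
  singular_point_on_two_planes_general l l' hl' hnp F hF x hFx hsing hl0
end

section
/- Let ℓ be a prime power with ℓ ≡ 1 (mod 3) and let α ∈ F_ℓ^*. Then the cubic surface in P³ over F_ℓ defined by F := T0T1T2 − (1/27)·(αT0 + T1 + α^{-1}T2)³ = 0 has exactly ℓ·(ℓ−1) non-singular F_ℓ-rational points, i.e. exactly ℓ(ℓ−1) points (t0:t1:t2:t3) ∈ P³(F_ℓ) with F(t0,t1,t2,t3) = 0 at which not all four partial derivatives of F vanish. -/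
/-!
Let `ω ∈ F` be a primitive cube root of unity (it exists because `3 ∣ ℓ - 1`), put
`u = (α t₀, t₁, α⁻¹ t₂)` and take its discrete Fourier transform `m₀ = u₀ + u₁ + u₂`,
`m₁ = u₀ + ω² u₁ + ω u₂`, `m₂ = u₀ + ω u₁ + ω² u₂`. The three factors of
`a³ + b³ + c³ - 3abc = (a + b + c)(a + ωb + ω²c)(a + ω²b + ωc)` at `(m₀, m₁, m₂)` are
`3u₀, 3u₁, 3u₂`, so `27 f = m₁³ + m₂³ - 3 m₀ m₁ m₂`: in these coordinates the surface is the cone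
over the folium of Descartes, which is singular only where `m₁ = m₂ = 0`. At a smooth point
`m₁, m₂ ≠ 0` and they determine `m₀`, so the smooth locus contains `(ℓ - 1)² ℓ` vectors, `ℓ - 1`
over each projective point.
-/

open MvPolynomial

open scoped LinearAlgebra.Projectivization

theorem Projectivization.card_subtype_rep_mul_card_units {k V : Type*} [Field k]
    [AddCommGroup V] [Module k V] (P : V → Prop) (hP : ∀ (c : kˣ) (v : V), P (c • v) ↔ P v) :
    Nat.card {x : ℙ k V // P x.rep} * Nat.card kˣ = Nat.card {v : V // v ≠ 0 ∧ P v} := by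
  have hrep (w : {v : V // v ≠ 0}) :
      P w ↔ P (nonZeroEquivProjectivizationProdUnits k V w).1.rep := by
    obtain ⟨c, hc⟩ := exists_smul_eq_mk_rep k w.1 w.2
    rw [← hP c]
    exact iff_of_eq (congrArg P hc)
  rw [← Nat.card_prod, Nat.card_congr
    (((Equiv.subtypeSubtypeEquivSubtypeInter (· ≠ 0) P).symm.trans
      ((nonZeroEquivProjectivizationProdUnits k V).subtypeEquiv hrep)).trans
      (Equiv.prodSubtypeFstEquivSubtypeProd (p := fun x : ℙ k V ↦ P x.rep)))]

theorem exists_isPrimitiveRoot_of_dvd_card_sub_one {F : Type*} [Field F] [Finite F] (p : ℕ)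
    [Fact p.Prime] (hp : p ∣ Nat.card F - 1) : ∃ ω : F, IsPrimitiveRoot ω p := by
  obtain ⟨u, hu⟩ := exists_prime_orderOf_dvd_card' (G := Fˣ) p (by rwa [Nat.card_units])
  exact ⟨u, IsPrimitiveRoot.coe_units_iff.mpr (hu ▸ IsPrimitiveRoot.orderOf u)⟩

theorem IsPrimitiveRoot.sq_add_self_add_one {R : Type*} [CommRing R] [IsDomain R] {ω : R}
    (h : IsPrimitiveRoot ω 3) : ω ^ 2 + ω + 1 = 0 := by
  simpa [Finset.sum_range_succ, add_comm, add_left_comm, add_assoc] using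
    h.geom_sum_eq_zero (by norm_num)

lemma dft3_eq_zero_iff {F : Type*} [Field F] {ω : F} (hω : ω ^ 2 + ω + 1 = 0) (h3 : (3 : F) ≠ 0)
    (a b c : F) :
    (a + b + c = 0 ∧ a + ω ^ 2 * b + ω * c = 0 ∧ a + ω * b + ω ^ 2 * c = 0) ↔
      (a = 0 ∧ b = 0 ∧ c = 0) := by
  constructor
  · rintro ⟨h0, h1, h2⟩
    refine ⟨?_, ?_, ?_⟩ <;> apply (mul_eq_zero.mp _).resolve_left h3 <;> grind
  · rintro ⟨rfl, rfl, rfl⟩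
    simp

section Folium

variable {F : Type*} [Field F]

def folium (m : Fin 4 → F) : F := m 1 ^ 3 + m 2 ^ 3 - 3 * m 0 * m 1 * m 2

lemma folium_smul (c : F) (m : Fin 4 → F) : folium (c • m) = c ^ 3 * folium m := by
  simp only [folium, Pi.smul_apply, smul_eq_mul]
  ring

lemma folium_gradient_eq_zero_iff (m : Fin 4 → F) :
    (-(m 1 * m 2) = 0 ∧ m 1 ^ 2 - m 0 * m 2 = 0 ∧ m 2 ^ 2 - m 0 * m 1 = 0) ↔
      (m 1 = 0 ∧ m 2 = 0) := by
  constructor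
  · rintro ⟨h12, h1, h2⟩
    rcases mul_eq_zero.mp (neg_eq_zero.mp h12) with h | h <;> simp_all
  · rintro ⟨h1, h2⟩
    simp [h1, h2]

def smoothFoliumCone : Set (Fin 4 → F) := {m | folium m = 0 ∧ ¬(m 1 = 0 ∧ m 2 = 0)}

lemma smul_mem_smoothFoliumCone_iff {c : F} (hc : c ≠ 0) {m : Fin 4 → F} :
    c • m ∈ smoothFoliumCone ↔ m ∈ smoothFoliumCone := by
  simp [smoothFoliumCone, folium_smul, hc]

lemma ne_zero_of_mem_smoothFoliumCone {m : Fin 4 → F} (hm : m ∈ smoothFoliumCone) :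
    m 1 ≠ 0 ∧ m 2 ≠ 0 := by
  obtain ⟨hf, hm⟩ := hm
  constructor <;> intro h <;> simp_all [folium]

noncomputable def smoothFoliumConeEquiv (h3 : (3 : F) ≠ 0) :
    (smoothFoliumCone : Set (Fin 4 → F)) ≃ Fˣ × Fˣ × F where
  toFun m := (.mk0 _ (ne_zero_of_mem_smoothFoliumCone m.2).1,
    .mk0 _ (ne_zero_of_mem_smoothFoliumCone m.2).2, m.1 3)
  invFun p := ⟨![(p.1 ^ 3 + p.2.1 ^ 3) / (3 * p.1 * p.2.1), p.1, p.2.1, p.2.2], by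
    refine ⟨?_, fun h ↦ p.1.ne_zero h.1⟩
    simp only [folium, Fin.isValue, Matrix.cons_val_zero, Matrix.cons_val_one, Matrix.cons_val]
    field_simp
    ring⟩
  left_inv m := by
    obtain ⟨h1, h2⟩ := ne_zero_of_mem_smoothFoliumCone m.2
    have hm : folium m.1 = 0 := m.2.1
    rw [folium] at hm
    ext i
    fin_cases i <;>
      simp only [Units.val_mk0, Fin.isValue, Matrix.cons_val_zero, Matrix.cons_val_one,
        Matrix.cons_val, Fin.zero_eta, Fin.mk_one, Fin.reduceFinMk]
    field_simp
    linear_combination hm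
  right_inv p := Prod.ext (Units.ext rfl) (Prod.ext (Units.ext rfl) rfl)

lemma card_smoothFoliumCone [Finite F] (h3 : (3 : F) ≠ 0) :
    Nat.card (smoothFoliumCone : Set (Fin 4 → F)) =
      Nat.card Fˣ * (Nat.card Fˣ * Nat.card F) := by
  rw [Nat.card_congr (smoothFoliumConeEquiv h3), Nat.card_prod, Nat.card_prod]

end Folium

section NodalCone

variable {F : Type*} [Field F]

noncomputable def nodalCone (α : F) : MvPolynomial (Fin 4) F :=
  X 0 * X 1 * X 2 - C (27 : F)⁻¹ * (C α * X 0 + X 1 + C α⁻¹ * X 2) ^ 3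

def coneCoords (α ω : F) : (Fin 4 → F) →ₗ[F] Fin 4 → F where
  toFun v := ![α * v 0 + v 1 + α⁻¹ * v 2, α * v 0 + ω ^ 2 * v 1 + ω * α⁻¹ * v 2,
    α * v 0 + ω * v 1 + ω ^ 2 * α⁻¹ * v 2, v 3]
  map_add' v w := by
    ext i
    fin_cases i <;>
      simp only [Pi.add_apply, Fin.isValue, Matrix.cons_val_zero, Matrix.cons_val_one,
        Matrix.cons_val, Fin.zero_eta, Fin.mk_one, Fin.reduceFinMk] <;>
      ring
  map_smul' c v := by
    ext i
    fin_cases i <;>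
      simp only [Pi.smul_apply, smul_eq_mul, RingHom.id_apply, Fin.isValue, Matrix.cons_val_zero,
        Matrix.cons_val_one, Matrix.cons_val, Fin.zero_eta, Fin.mk_one, Fin.reduceFinMk] <;>
      ring

variable {α ω : F} (hα : α ≠ 0) (hω : ω ^ 2 + ω + 1 = 0) (h3 : (3 : F) ≠ 0)
include hα hω h3

lemma coneCoords_bijective : Function.Bijective (coneCoords α ω) := by
  refine Function.bijective_iff_has_inverse.mpr
    ⟨fun m ↦ ![α⁻¹ * (m 0 + m 1 + m 2) / 3, (m 0 + ω * m 1 + ω ^ 2 * m 2) / 3,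
      α * (m 0 + ω ^ 2 * m 1 + ω * m 2) / 3, m 3], fun v ↦ ?_, fun m ↦ ?_⟩ <;>
  · ext i
    fin_cases i <;>
      simp only [coneCoords, LinearMap.coe_mk, AddHom.coe_mk, Fin.isValue, Matrix.cons_val_zero,
        Matrix.cons_val_one, Matrix.cons_val, Fin.zero_eta, Fin.mk_one, Fin.reduceFinMk] <;>
      field_simp <;>
      grind

lemma eval_nodalCone (v : Fin 4 → F) :
    27 * eval v (nodalCone α) = folium (coneCoords α ω v) := by
  have h27 : (27 : F) ≠ 0 := by exact_mod_cast pow_ne_zero 3 h3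
  simp only [nodalCone, coneCoords, folium, map_sub, map_mul, map_add, map_pow, eval_X, eval_C,
    LinearMap.coe_mk, AddHom.coe_mk, Fin.isValue, Matrix.cons_val_zero, Matrix.cons_val_one,
    Matrix.cons_val]
  field_simp
  grind

lemma nine_mul_eval_pderiv_nodalCone (v : Fin 4 → F) :
    let m := coneCoords α ω v
    9 * eval v (pderiv 0 (nodalCone α)) =
        α * (-(m 1 * m 2) + (m 1 ^ 2 - m 0 * m 2) + (m 2 ^ 2 - m 0 * m 1)) ∧
      9 * eval v (pderiv 1 (nodalCone α)) =
        -(m 1 * m 2) + ω ^ 2 * (m 1 ^ 2 - m 0 * m 2) + ω * (m 2 ^ 2 - m 0 * m 1) ∧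
      9 * eval v (pderiv 2 (nodalCone α)) =
        α⁻¹ * (-(m 1 * m 2) + ω * (m 1 ^ 2 - m 0 * m 2) + ω ^ 2 * (m 2 ^ 2 - m 0 * m 1)) ∧
      eval v (pderiv 3 (nodalCone α)) = 0 := by
  have h27 : (27 : F) ≠ 0 := by exact_mod_cast pow_ne_zero 3 h3
  refine ⟨?_, ?_, ?_, by simp [nodalCone, pderiv_X]⟩ <;>
  simp only [nodalCone, coneCoords, map_sub, map_add, map_mul, map_pow, Derivation.leibniz,
    Derivation.leibniz_pow, derivation_C, pderiv_X, Pi.single_eq_same, Pi.single_eq_of_ne, ne_eq,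
    Fin.reduceEq, not_false_eq_true, smul_eq_mul, nsmul_eq_mul, mul_zero, mul_one, zero_add,
    add_zero, Nat.add_one_sub_one, Nat.cast_ofNat, eval_X, eval_C, eval_ofNat, LinearMap.coe_mk,
    AddHom.coe_mk, Matrix.cons_val_one, Matrix.cons_val_zero, Matrix.cons_val, Fin.isValue] <;>
  field_simp <;>
  grind

lemma nodalCone_singular_iff (v : Fin 4 → F) :
    (∀ k, eval v (pderiv k (nodalCone α)) = 0) ↔
      coneCoords α ω v 1 = 0 ∧ coneCoords α ω v 2 = 0 := by
  have h9 : (9 : F) ≠ 0 := by exact_mod_cast pow_ne_zero 2 h3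
  obtain ⟨e0, e1, e2, e3⟩ := nine_mul_eval_pderiv_nodalCone hα hω h3 v
  rw [← folium_gradient_eq_zero_iff, ← dft3_eq_zero_iff hω h3]
  constructor
  · intro h
    rw [h, mul_zero] at e0 e1 e2
    refine ⟨?_, e1.symm, ?_⟩
    · exact (mul_eq_zero.mp e0.symm).resolve_left hα
    · exact (mul_eq_zero.mp e2.symm).resolve_left (inv_ne_zero hα)
  · rintro ⟨h0, h1, h2⟩ k
    fin_cases k
    · simpa [h0, h9] using e0
    · simpa [h1, h9] using e1
    · simpa [h2, h9] using e2
    · exact e3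

lemma nodalCone_nonsingular_iff (v : Fin 4 → F) :
    (eval v (nodalCone α) = 0 ∧ ∃ k, eval v (pderiv k (nodalCone α)) ≠ 0) ↔
      coneCoords α ω v ∈ smoothFoliumCone := by
  have h27 : (27 : F) ≠ 0 := by exact_mod_cast pow_ne_zero 3 h3
  rw [← not_forall, nodalCone_singular_iff hα hω h3, smoothFoliumCone, Set.mem_ofPred_eq,
    ← eval_nodalCone hα hω h3, mul_eq_zero, or_iff_right h27]

lemma card_coneCoords_preimage_smoothFoliumCone :
    Nat.card {v : Fin 4 → F // v ≠ 0 ∧ coneCoords α ω v ∈ smoothFoliumCone} =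
      Nat.card (smoothFoliumCone : Set (Fin 4 → F)) :=
  Nat.card_congr <| (Equiv.ofBijective _ (coneCoords_bijective hα hω h3)).subtypeEquiv
    fun v ↦ ⟨And.right, fun h ↦ ⟨fun hv ↦ (ne_zero_of_mem_smoothFoliumCone h).1
      (by simp [hv]), h⟩⟩

end NodalCone

/-- **Counting lemma.**  Let `F` be the finite field with `ℓ` elements, `ℓ ≡ 1 (mod 3)`, and
let `α ∈ F^*`.  The cone `T0T1T2 − (1/27)(αT0 + T1 + α⁻¹T2)³ = 0` in `P³` over `F` has
exactly `ℓ(ℓ−1)` non-singular `F`-rational points. -/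
theorem count_nonsingular_points_of_cone
    {F : Type*} [Field F] [Fintype F] (hcard : Fintype.card F % 3 = 1)
    (α : F) (hα : α ≠ 0)
    (f : MvPolynomial (Fin 4) F)
    (hf : f = X 0 * X 1 * X 2 -
      C (27 : F)⁻¹ * (C α * X 0 + X 1 + C α⁻¹ * X 2) ^ 3) :
    Nat.card {x : Projectivization F (Fin 4 → F) //
        eval x.rep f = 0 ∧ ∃ k : Fin 4, eval x.rep (pderiv k f) ≠ 0} =
      Fintype.card F * (Fintype.card F - 1) := by
  rw [show f = nodalCone α from hf]
  have : Fact (Nat.Prime 3) := ⟨Nat.prime_three⟩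
  obtain ⟨ω, hω⟩ := exists_isPrimitiveRoot_of_dvd_card_sub_one (F := F) 3
    (by rw [Nat.card_eq_fintype_card]; omega)
  have h3 : (3 : F) ≠ 0 := by exact_mod_cast hω.neZero'.out
  have hω' := hω.sq_add_self_add_one
  have hpoints : Nat.card {x : ℙ F (Fin 4 → F) //
      eval x.rep (nodalCone α) = 0 ∧ ∃ k, eval x.rep (pderiv k (nodalCone α)) ≠ 0} =
        Nat.card {x : ℙ F (Fin 4 → F) // coneCoords α ω x.rep ∈ smoothFoliumCone} :=
    Nat.card_congr (Equiv.subtypeEquivRight fun x ↦ nodalCone_nonsingular_iff hα hω' h3 x.rep)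
  have hvectors := Projectivization.card_subtype_rep_mul_card_units (k := F)
    (fun v ↦ coneCoords α ω v ∈ smoothFoliumCone)
    (fun c v ↦ by rw [Units.smul_def, map_smul, smul_mem_smoothFoliumCone_iff c.ne_zero])
  rw [card_coneCoords_preimage_smoothFoliumCone hα hω' h3, card_smoothFoliumCone (F := F) h3]
    at hvectors
  rw [hpoints, Nat.eq_of_mul_eq_mul_right Nat.card_pos
    (hvectors.trans (by ring : _ = Nat.card F * Nat.card Fˣ * Nat.card Fˣ)),
    Nat.card_units, Nat.card_eq_fintype_card]
end

section
/- Let p ≠ 3 be a prime number and let F := 27·T0T1T2 − (T0 + T1 + T2)³ ∈ F_p[T0, T1, T2]. Then: (1) a nonzero point (t0, t1, t2) with coordinates in an algebraic closure of F_p satisfies F(t0,t1,t2) = 0 together with the vanishing of all three partial derivatives of F if and only if (t0, t1, t2) is a scalar multiple of (1, 1, 1); (2) expanding around this singular point, F(1+u, 1+v, 1) = −9(u² − uv + v²) − (u+v)³, and the binary quadratic form u² − uv + v² factors into two non-proportional linear forms over F_p if and only if p ≡ 1 (mod 3). In particular, the curve C ⊂ P² over F_p defined by F = 0 has a node at (1:1:1)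 as its unique singular point, whose two tangent directions are F_p-rational if and only if p ≡ 1 (mod 3). -/
/-!
At a singular point of `27xyz - s³`, `s = x + y + z`, the partial derivatives give
`9yz = 9xz = 9xy = s²`. If `s = 0` all pairwise products vanish, so `x² = xs - xy - xz = 0` and
likewise for `y`, `z`; otherwise no coordinate vanishes and `z(x - y) = x(y - z) = 0`.

A factorization `(au + bv)(a'u + b'v)` of `u² - uv + v²` makes `ζ = a'b` a root of `ζ² + ζ + 1`,
and `ζ = 1` exactly when the two factors are proportional. So the tangents at the node are
rational iff `F_p` contains a primitive cube root of unity, i.e. iff `3` divides `#F_pˣ = p - 1`.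
-/

open MvPolynomial

noncomputable def nodalCubic (R : Type*) [CommRing R] : MvPolynomial (Fin 3) R :=
  C 27 * (X 0 * X 1 * X 2) - (X 0 + X 1 + X 2) ^ 3

def IsSingularPoint {σ R : Type*} [CommRing R] (F : MvPolynomial σ R) (t : σ → R) : Prop :=
  eval t F = 0 ∧ ∀ k, eval t (pderiv k F) = 0

lemma map_nodalCubic {R S : Type*} [CommRing R] [CommRing S] (φ : R →+* S) :
    map φ (nodalCubic R) = nodalCubic S := by
  simp [nodalCubic, map_ofNat]

lemma isSingularPoint_nodalCubic_iff_eval {R : Type*} [CommRing R] (t : Fin 3 → R) :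
    IsSingularPoint (nodalCubic R) t ↔
      27 * (t 0 * t 1 * t 2) = (t 0 + t 1 + t 2) ^ 3 ∧
      27 * (t 1 * t 2) = 3 * (t 0 + t 1 + t 2) ^ 2 ∧
      27 * (t 0 * t 2) = 3 * (t 0 + t 1 + t 2) ^ 2 ∧
      27 * (t 0 * t 1) = 3 * (t 0 + t 1 + t 2) ^ 2 := by
  simp [IsSingularPoint, nodalCubic, Fin.forall_fin_succ, pderiv_X, Pi.single_apply, sub_eq_zero,
    mul_comm]

lemma eq_and_eq_of_mul_eq_sq_add {R : Type*} [CommRing R] [IsDomain R] {c x y z : R}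
    (hc : c ≠ 0) (hyz : c * (y * z) = (x + y + z) ^ 2) (hxz : c * (x * z) = (x + y + z) ^ 2)
    (hxy : c * (x * y) = (x + y + z) ^ 2) : x = y ∧ y = z := by
  by_cases hs : x + y + z = 0
  · have zero_of_mul (a b : R) (h : c * (a * b) = (x + y + z) ^ 2) : a * b = 0 := by
      simpa [hs, hc] using h
    have hx : x ^ 2 = 0 := by
      linear_combination x * hs - zero_of_mul x y hxy - zero_of_mul x z hxz
    have hy : y ^ 2 = 0 := by
      linear_combination y * hs - zero_of_mul x y hxy - zero_of_mul y z hyz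
    have hz : z ^ 2 = 0 := by
      linear_combination z * hs - zero_of_mul x z hxz - zero_of_mul y z hyz
    simp only [pow_eq_zero_iff two_ne_zero] at hx hy hz
    exact ⟨hx.trans hy.symm, hy.trans hz.symm⟩
  · have hxz0 : c * (x * z) ≠ 0 := hxz ▸ pow_ne_zero 2 hs
    obtain ⟨-, hx, hz⟩ : c ≠ 0 ∧ x ≠ 0 ∧ z ≠ 0 := by simpa only [mul_ne_zero_iff] using hxz0
    have hxy' : c * z * (x - y) = 0 := by linear_combination hxz - hyz
    have hyz' : c * x * (y - z) = 0 := by linear_combination hxy - hxz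
    simp only [mul_eq_zero, hc, hx, hz, sub_eq_zero, false_or] at hxy' hyz'
    exact ⟨hxy', hyz'⟩

lemma isSingularPoint_nodalCubic_iff {R : Type*} [CommRing R] [IsDomain R] (h3 : (3 : R) ≠ 0)
    (t : Fin 3 → R) : IsSingularPoint (nodalCubic R) t ↔ ∃ c, t = fun _ => c := by
  rw [isSingularPoint_nodalCubic_iff_eval]
  constructor
  · rintro ⟨-, hyz, hxz, hxy⟩
    have h9 : (9 : R) ≠ 0 := by
      rw [show (9 : R) = 3 * 3 by norm_num]
      exact mul_ne_zero h3 h3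
    have nine_mul_eq {a b : R} (h : 27 * (a * b) = 3 * (t 0 + t 1 + t 2) ^ 2) :
        9 * (a * b) = (t 0 + t 1 + t 2) ^ 2 :=
      mul_left_cancel₀ h3 (by linear_combination h)
    obtain ⟨h01, h12⟩ :=
      eq_and_eq_of_mul_eq_sq_add h9 (nine_mul_eq hyz) (nine_mul_eq hxz) (nine_mul_eq hxy)
    exact ⟨t 0, funext fun i => by fin_cases i <;> simp [h01, h12]⟩
  · rintro ⟨c, rfl⟩
    refine ⟨?_, ?_, ?_, ?_⟩ <;> ring

lemma exists_factorization_iff_exists_isPrimitiveRoot_three {K : Type*} [Field K] :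
    (∃ a b a' b' : K,
        (X 0 ^ 2 - X 0 * X 1 + X 1 ^ 2 : MvPolynomial (Fin 2) K) =
          (C a * X 0 + C b * X 1) * (C a' * X 0 + C b' * X 1) ∧
        ∀ γ : K, (a', b') ≠ (γ * a, γ * b)) ↔ ∃ ζ : K, IsPrimitiveRoot ζ 3 := by
  constructor
  · rintro ⟨a, b, a', b', hfac, hnp⟩
    have eval_eq (u v : K) := congrArg (eval ![u, v]) hfac
    simp only [map_add, map_sub, map_mul, map_pow, eval_X, eval_C, Matrix.cons_val_zero,
      Matrix.cons_val_one, Matrix.cons_val_fin_one] at eval_eq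
    have haa : a * a' = 1 := by simpa using (eval_eq 1 0).symm
    have hbb : b * b' = 1 := by simpa using (eval_eq 0 1).symm
    have hab : a * b' + a' * b = -1 := by linear_combination (eval_eq 1 1).symm - haa - hbb
    have hζ : (a' * b) ^ 2 + a' * b + 1 = 0 := by
      linear_combination (a' * b) * hab - (b * b') * haa - hbb
    refine ⟨a' * b, IsPrimitiveRoot.iff_orderOf.mpr (orderOf_eq_prime ?_ ?_)⟩
    · linear_combination (a' * b - 1) * hζ
    · intro h1
      have hb' : b' = a' := by
        apply mul_left_cancel₀ (left_ne_zero_of_mul_eq_one hbb)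
        linear_combination hbb - h1
      refine hnp (a' * a') (Prod.ext ?_ ?_)
      · linear_combination (-a') * haa
      · linear_combination hb' - a' * h1
  · rintro ⟨ζ, hζ⟩
    have hζ3 : ζ ^ 2 + ζ + 1 = 0 := by
      have h := hζ.geom_sum_eq_zero (by norm_num)
      simp only [Finset.sum_range_succ, Finset.sum_range_zero] at h
      linear_combination h
    refine ⟨1, ζ, 1, ζ ^ 2, ?_, ?_⟩
    · have hC := congrArg (C : K → MvPolynomial (Fin 2) K) hζ3
      simp only [map_add, map_pow, map_one, map_zero] at hC
      simp only [map_one, map_pow]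
      linear_combination (-(X 0 * X 1) - X 1 ^ 2 * (C ζ - 1)) * hC
    · intro γ h
      simp only [Prod.mk.injEq, mul_one] at h
      obtain ⟨rfl, h⟩ := h
      have := hζ.pow_inj (i := 2) (j := 1) (by norm_num) (by norm_num) (by simpa using h)
      norm_num at this

lemma ZMod.exists_isPrimitiveRoot_iff_dvd {p q : ℕ} [Fact p.Prime] [Fact q.Prime] :
    (∃ ζ : ZMod p, IsPrimitiveRoot ζ q) ↔ q ∣ p - 1 := by
  rw [← ZMod.card_units p]
  constructor
  · rintro ⟨ζ, hζ⟩
    obtain ⟨u, rfl⟩ := hζ.isUnit (Fact.out : q.Prime).ne_zero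
    exact (IsPrimitiveRoot.coe_units_iff.mp hζ).eq_orderOf ▸ orderOf_dvd_card
  · intro hq
    obtain ⟨u, hu⟩ := exists_prime_orderOf_dvd_card q hq
    exact ⟨u, IsPrimitiveRoot.coe_units_iff.mpr (IsPrimitiveRoot.iff_orderOf.mpr hu)⟩

/-- **Lemma (the nodal cubic `27T0T1T2 = (T0+T1+T2)³`).**  Let `p ≠ 3` be a prime and
`F = 27T0T1T2 − (T0+T1+T2)³` over `F_p = ZMod p`.  (1) A nonzero point over an algebraic
closure is a singular point of `F = 0` iff it is a scalar multiple of `(1,1,1)`.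
(2) One has the expansion `F(1+u, 1+v, 1) = −9(u² − uv + v²) − (u+v)³`, and the quadratic
form `u² − uv + v²` factors into two non-proportional linear forms over `F_p` iff
`p ≡ 1 (mod 3)`. -/
theorem nodal_cubic_singular_point_and_tangents
    (p : ℕ) [Fact (Nat.Prime p)] (hp3 : p ≠ 3)
    (f : MvPolynomial (Fin 3) (ZMod p))
    (hf : f = C 27 * (X 0 * X 1 * X 2) - (X 0 + X 1 + X 2) ^ 3) :
    (∀ t : Fin 3 → AlgebraicClosure (ZMod p), t ≠ 0 →
      ((eval t (MvPolynomial.map (algebraMap (ZMod p) (AlgebraicClosure (ZMod p))) f) = 0 ∧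
        ∀ k : Fin 3, eval t (pderiv k
          (MvPolynomial.map (algebraMap (ZMod p) (AlgebraicClosure (ZMod p))) f)) = 0) ↔
        ∃ c : AlgebraicClosure (ZMod p), t = fun _ => c)) ∧
    ((C 27 * ((1 + X 0) * (1 + X 1) * 1) - ((1 + X 0) + (1 + X 1) + 1) ^ 3 :
        MvPolynomial (Fin 2) (ZMod p))
        = -(C 9) * (X 0 ^ 2 - X 0 * X 1 + X 1 ^ 2) - (X 0 + X 1) ^ 3) ∧
    ((∃ a b a' b' : ZMod p,
        (X 0 ^ 2 - X 0 * X 1 + X 1 ^ 2 : MvPolynomial (Fin 2) (ZMod p)) =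
          (C a * X 0 + C b * X 1) * (C a' * X 0 + C b' * X 1) ∧
        ∀ γ : ZMod p, (a', b') ≠ (γ * a, γ * b)) ↔ p % 3 = 1) := by
  have h3 : (3 : AlgebraicClosure (ZMod p)) ≠ 0 := by
    exact_mod_cast CharP.cast_ne_zero_of_ne_of_prime _ Nat.prime_three hp3
  refine ⟨fun t _ => ?_, by simp only [map_ofNat]; ring, ?_⟩
  · rw [show f = nodalCubic _ from hf, map_nodalCubic]
    exact isSingularPoint_nodalCubic_iff h3 t
  · have := (Fact.out : p.Prime).two_le
    rw [exists_factorization_iff_exists_isPrimitiveRoot_three, ZMod.exists_isPrimitiveRoot_iff_dvd]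
    omega
end

section
/- Let p ≠ 3 be a prime number, e ≥ 1 an integer, and q = p^e. Then for every (t0, t1, t2) ∈ F_q³ ∖ {0} with 27·t0t1t2 = (t0 + t1 + t2)³, the following hold: (1) at least one of the products t0t1, t1t2, t2t0 is nonzero, i.e. at least one of the expressions t1/t0, t2/t1, t0/t2 is properly defined and nonzero in F_q; (2) whenever t0 ≠ 0 and t1 ≠ 0, the quotient t1/t0 is a cube in F_q^*, and likewise t2/t1 is a cube whenever t1, t2 ≠ 0, and t0/t2 is a cube whenever t2, t0 ≠ 0. -/
/-!
The curve `27abc = (a + b + c)³` is a nodal cubic with node `(1 : 1 : 1)`; the lines through the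
node rationally parametrize it, and along that parametrization `b / a` becomes an explicit cube.
Concretely, `(a + c - 2b)³ a - b (b + c - 2a)³ = (b - a) (27abc - (a + b + c)³)`, so
`b / a = ((a + c - 2b) / (b + c - 2a))³` on the curve, unless `b + c = 2a`, which on the curve
forces `b = a`.
-/

section NodalCubic

variable {F : Type*} [Field F] {a b c : F}

theorem eq_of_nodal_cubic_of_add_eq (h3 : (3 : F) ≠ 0) (ha : a ≠ 0)
    (h : 27 * (a * b * c) = (a + b + c) ^ 3) (hbc : b + c = 2 * a) : b = a := by
  have h27a : (27 : F) * a ≠ 0 := by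
    have : (27 : F) = 3 ^ 3 := by norm_num
    exact mul_ne_zero (this ▸ pow_ne_zero 3 h3) ha
  have hbc_mul : b * c = a ^ 2 := by
    have : 27 * a * (b * c) = 27 * a * a ^ 2 := by
      linear_combination h + ((a + b + c) ^ 2 + 3 * a * (a + b + c) + 9 * a ^ 2) * hbc
    exact mul_left_cancel₀ h27a this
  have hsq : (b - a) ^ 2 = 0 := by linear_combination b * hbc - hbc_mul
  exact sub_eq_zero.mp (pow_eq_zero_iff two_ne_zero |>.mp hsq)

theorem exists_cube_eq_div_of_nodal_cubic (h3 : (3 : F) ≠ 0) (ha : a ≠ 0) (hb : b ≠ 0)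
    (h : 27 * (a * b * c) = (a + b + c) ^ 3) : ∃ s : F, s ≠ 0 ∧ b / a = s ^ 3 := by
  by_cases hbc : b + c - 2 * a = 0
  · refine ⟨1, one_ne_zero, ?_⟩
    rw [eq_of_nodal_cubic_of_add_eq h3 ha h (by linear_combination hbc), div_self ha, one_pow]
  · have hcube : b / a = ((a + c - 2 * b) / (b + c - 2 * a)) ^ 3 := by
      rw [div_pow, div_eq_div_iff ha (pow_ne_zero 3 hbc)]
      linear_combination (a - b) * h
    refine ⟨_, fun hs => div_ne_zero hb ha ?_, hcube⟩
    rw [hcube, hs, zero_pow three_ne_zero]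

theorem eq_zero_of_nodal_cubic_of_mul_eq_zero (h : 27 * (a * b * c) = (a + b + c) ^ 3)
    (hab : a * b = 0) (hbc : b * c = 0) (hca : c * a = 0) : a = 0 ∧ b = 0 ∧ c = 0 := by
  have hsum : a + b + c = 0 := by
    refine pow_eq_zero_iff three_ne_zero |>.mp ?_
    rw [← h, hab, zero_mul, mul_zero]
  refine ⟨?_, ?_, ?_⟩ <;> refine pow_eq_zero_iff two_ne_zero |>.mp ?_
  · linear_combination a * hsum - hab - hca
  · linear_combination b * hsum - hab - hbc
  · linear_combination c * hsum - hbc - hca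

end NodalCubic

theorem nodal_cubic_quotients_are_cubes_general
    {F : Type*} [Field F]
    (p : ℕ) (hp3 : p ≠ 3) [CharP F p]
    (t : Fin 3 → F) (ht : t ≠ 0)
    (hC : 27 * (t 0 * t 1 * t 2) = (t 0 + t 1 + t 2) ^ 3) :
    (t 0 * t 1 ≠ 0 ∨ t 1 * t 2 ≠ 0 ∨ t 2 * t 0 ≠ 0) ∧
    (t 0 ≠ 0 → t 1 ≠ 0 → ∃ s : F, s ≠ 0 ∧ t 1 / t 0 = s ^ 3) ∧
    (t 1 ≠ 0 → t 2 ≠ 0 → ∃ s : F, s ≠ 0 ∧ t 2 / t 1 = s ^ 3) ∧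
    (t 2 ≠ 0 → t 0 ≠ 0 → ∃ s : F, s ≠ 0 ∧ t 0 / t 2 = s ^ 3) := by
  have h3 : (3 : F) ≠ 0 := by
    exact_mod_cast CharP.cast_ne_zero_of_ne_of_prime F Nat.prime_three hp3
  refine ⟨?_, fun h0 h1 => exists_cube_eq_div_of_nodal_cubic h3 h0 h1 hC,
    fun h1 h2 => exists_cube_eq_div_of_nodal_cubic (c := t 0) h3 h1 h2 (by linear_combination hC),
    fun h2 h0 => exists_cube_eq_div_of_nodal_cubic (c := t 1) h3 h2 h0 (by linear_combination hC)⟩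
  by_contra! hprod
  obtain ⟨h0, h1, h2⟩ := eq_zero_of_nodal_cubic_of_mul_eq_zero hC hprod.1 hprod.2.1 hprod.2.2
  exact ht (funext fun i => by fin_cases i <;> assumption)

/-- **Lemma (points of `27T0T1T2 = (T0+T1+T2)³` over `F_q`).**  Let `p ≠ 3` be a prime,
`e ≥ 1`, and `F` the field with `q = p^e` elements.  For every nonzero `(t0,t1,t2) ∈ F³`
with `27·t0t1t2 = (t0+t1+t2)³`: (1) at least one of `t0t1`, `t1t2`, `t2t0` is nonzero;
(2) each of the quotients `t1/t0`, `t2/t1`, `t0/t2` is a cube in `F^*` whenever it is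
properly defined. -/
theorem nodal_cubic_quotients_are_cubes
    {F : Type*} [Field F] [Fintype F]
    (p e : ℕ) (hp : Nat.Prime p) (hp3 : p ≠ 3) (he : 1 ≤ e) [CharP F p]
    (hcard : Fintype.card F = p ^ e)
    (t : Fin 3 → F) (ht : t ≠ 0)
    (hC : 27 * (t 0 * t 1 * t 2) = (t 0 + t 1 + t 2) ^ 3) :
    (t 0 * t 1 ≠ 0 ∨ t 1 * t 2 ≠ 0 ∨ t 2 * t 0 ≠ 0) ∧
    (t 0 ≠ 0 → t 1 ≠ 0 → ∃ s : F, s ≠ 0 ∧ t 1 / t 0 = s ^ 3) ∧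
    (t 1 ≠ 0 → t 2 ≠ 0 → ∃ s : F, s ≠ 0 ∧ t 2 / t 1 = s ^ 3) ∧
    (t 2 ≠ 0 → t 0 ≠ 0 → ∃ s : F, s ≠ 0 ∧ t 0 / t 2 = s ^ 3) :=
  nodal_cubic_quotients_are_cubes_general p hp3 t ht hC
end

section
/- Let 𝔩 be a nonzero prime of O_K that is ramified in L/K, with 𝔩O_L = 𝔓³, and suppose ℓ := #(O_K/𝔩) is not a power of 3. Let α ∈ (O_K/𝔩)^* and assume a, b, c, d ∈ L satisfy ν_𝔓(a), ν_𝔓(b), ν_𝔓(c) ≥ 0 with residues a ≡ α/3, b ≡ 1/3, c ≡ 1/(3α) (mod 𝔓) in O_L/𝔓 ≅ O_K/𝔩, and ν_𝔓(d) ∈ {1, 2}. Then the cubic surface S defined by T0T1T2 = N_{L/K}(aT0 + bT1 + cT2 + dT3) has a K_𝔩-rational point. -/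
/-!
Take `A ∈ O_K` lifting `α` and look at the points `(x, 1, -A, 0)`. As `ℓ` is not a power of `3`,
`3` is a unit at `𝔩`, so `e = b - A c` lies in `𝔓`; on this line the equation reads
`N_{L/K}(a x + e) + A x = 0`. Being the only prime above `𝔩`, `𝔓` is Galois-stable, so all
conjugates of `e` lie in `𝔓`: the cubic `N_{L/K}(a x + e)` has `𝔩`-integral coefficients, and
those of degree `< 3` lie in `𝔩`. Hence `N_{L/K}(a x + e) + A x` has a simple root at `x = 0`
modulo `𝔩` (its linear coefficient is a unit), which Hensel's lemma lifts to a root in `K_𝔩`.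
-/

open NumberField IsDedekindDomain MvPolynomial Filter Topology
open scoped Polynomial

theorem Valuation.map_eval_sub_eval_sub_le {R Γ₀ : Type*} [CommRing R]
    [LinearOrderedCommMonoidWithZero Γ₀] (v : Valuation R Γ₀) {p : R[X]}
    (hp : ∀ i, v (p.coeff i) ≤ 1) {ε : Γ₀} (hε : ε ≤ 1) {x y : R} (hx : v x ≤ ε) (hy : v y ≤ ε) :
    v (p.eval x - p.eval y - p.coeff 1 * (x - y)) ≤ ε * v (x - y) := by
  have hsplit : p.eval x - p.eval y - p.coeff 1 * (x - y) =
      (∑ i ∈ Finset.range p.natDegree,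
        p.coeff (i + 2) * ∑ j ∈ Finset.range (i + 2), x ^ j * y ^ (i + 1 - j)) * (x - y) := by
    rw [Polynomial.eval_eq_sum_range' (n := p.natDegree + 2) (by omega),
      Polynomial.eval_eq_sum_range' (n := p.natDegree + 2) (by omega), ← Finset.sum_sub_distrib,
      Finset.sum_range_succ', Finset.sum_range_succ', Finset.sum_mul]
    simp only [← mul_sub, mul_assoc, ← geom_sum₂_mul]
    simp
  have hmono : ∀ i j, j < i + 2 → v (x ^ j * y ^ (i + 1 - j)) ≤ ε := fun i j hj =>
    calc v (x ^ j * y ^ (i + 1 - j)) ≤ ε ^ j * ε ^ (i + 1 - j) := by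
          rw [map_mul, map_pow, map_pow]; gcongr
      _ = ε ^ (i + 1) := by rw [← pow_add]; congr 1; omega
      _ ≤ ε := pow_le_of_le_one zero_le hε (by omega)
  rw [hsplit, map_mul]
  gcongr
  refine v.map_sum_le fun i _ => ?_
  rw [map_mul, ← one_mul ε]
  exact mul_le_mul' (hp _) (v.map_sum_le fun j hj => hmono i j (Finset.mem_range.mp hj))

theorem Valuation.map_coeff_prod_C_mul_X_add_C {R Γ₀ : Type*} [CommRing R]
    [LinearOrderedCommMonoidWithZero Γ₀] (v : Valuation R Γ₀) {ι : Type*} (s : Finset ι)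
    {a e : ι → R} (ha : ∀ i ∈ s, v (a i) ≤ 1) (he : ∀ i ∈ s, v (e i) < 1) (j : ℕ) :
    v ((∏ i ∈ s, (Polynomial.C (a i) * Polynomial.X + Polynomial.C (e i))).coeff j) ≤ 1 ∧
      (j < s.card →
        v ((∏ i ∈ s, (Polynomial.C (a i) * Polynomial.X + Polynomial.C (e i))).coeff j) < 1) := by
  induction s using Finset.cons_induction generalizing j with
  | empty =>
    refine ⟨?_, by simp⟩
    rw [Finset.prod_empty, Polynomial.coeff_one]
    split_ifs <;> simp
  | cons i s hi ih =>
    simp only [Finset.mem_cons, forall_eq_or_imp] at ha he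
    rw [Finset.prod_cons, Finset.card_cons]
    set g := ∏ i ∈ s, (Polynomial.C (a i) * Polynomial.X + Polynomial.C (e i))
    cases j with
    | zero =>
      have hlt : v (e i * g.coeff 0) < 1 := by
        rw [map_mul]; exact Left.mul_lt_one_of_lt_of_le he.1 (ih ha.2 he.2 0).1
      simp only [add_mul, mul_assoc, Polynomial.coeff_add, Polynomial.mul_coeff_zero,
        Polynomial.coeff_X_zero, Polynomial.coeff_C_zero, zero_mul, mul_zero, zero_add]
      exact ⟨hlt.le, fun _ => hlt⟩
    | succ n =>
      simp only [add_mul, mul_assoc, Polynomial.coeff_add, Polynomial.coeff_C_mul,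
        Polynomial.coeff_X_mul]
      refine ⟨(v.map_add _ _).trans (max_le ?_ ?_), fun hn => (v.map_add _ _).trans_lt
        (max_lt ?_ ?_)⟩
      · rw [map_mul]; exact Left.mul_le_one ha.1 (ih ha.2 he.2 n).1
      · rw [map_mul]; exact Left.mul_le_one he.1.le (ih ha.2 he.2 (n + 1)).1
      · rw [map_mul]; exact Right.mul_lt_one_of_le_of_lt ha.1 ((ih ha.2 he.2 n).2 (by omega))
      · rw [map_mul]; exact Left.mul_lt_one_of_lt_of_le he.1 (ih ha.2 he.2 (n + 1)).1

namespace Valued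

variable {F Γ₀ : Type*} [LinearOrderedCommGroupWithZero Γ₀]

section Ring

variable [Ring F] [Valued F Γ₀]

instance nonarchimedeanAddGroup : NonarchimedeanAddGroup F where
  is_nonarchimedean U hU := by
    obtain ⟨γ, -, hγ⟩ := (hasBasis_nhds_zero F Γ₀).mem_iff.mp hU
    exact ⟨⟨v.restrict.ltAddSubgroup γ, (isOpen_ball F γ :)⟩, hγ⟩

theorem tendsto_zero_of_v_le {ι : Type*} {l : Filter ι} {f g : ι → F}
    (hg : Tendsto g l (𝓝 0)) (hfg : ∀ i, v (f i) ≤ v (g i)) : Tendsto f l (𝓝 0) := by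
  rw [(hasBasis_nhds_zero F Γ₀).tendsto_right_iff] at hg ⊢
  intro γ _
  filter_upwards [hg γ trivial] with i hi
  simp only [Valuation.restrict_lt_iff_lt_embedding] at hi ⊢
  exact (hfg i).trans_lt hi

end Ring

variable [Field F] [Valued F Γ₀] [MulArchimedean Γ₀] [CompleteSpace F]

theorem exists_isFixedPt_of_contracting {T : F → F}
    (hT : Continuous T) {S : Set F} (hS : Set.MapsTo T S S) {x₀ : F} (hx₀ : x₀ ∈ S) {q : F}
    (hq : v q < 1) (hcontr : ∀ x ∈ S, ∀ y ∈ S, v (T x - T y) ≤ v q * v (x - y)) :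
    ∃ y, Function.IsFixedPt T y := by
  set u : ℕ → F := fun n => T^[n] x₀
  have hu : ∀ n, u n ∈ S := fun n => hS.iterate n hx₀
  have hsucc : ∀ n, u (n + 1) = T (u n) := fun n => Function.iterate_succ_apply' T n x₀
  have hstep : ∀ n, v (u (n + 1) - u n) ≤ v (q ^ n * (u 1 - u 0)) := by
    intro n
    induction n with
    | zero => simp
    | succ n ih =>
      calc v (u (n + 2) - u (n + 1)) = v (T (u (n + 1)) - T (u n)) := by rw [hsucc, hsucc]
        _ ≤ v q * v (u (n + 1) - u n) := hcontr _ (hu _) _ (hu _)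
        _ ≤ v q * v (q ^ n * (u 1 - u 0)) := by gcongr
        _ = v (q ^ (n + 1) * (u 1 - u 0)) := by rw [pow_succ', mul_assoc, ← map_mul]
  have hpow : Tendsto (fun n => q ^ n * (u 1 - u 0)) atTop (𝓝 0) := by
    simpa using (tendsto_zero_pow_of_v_lt_one hq).mul_const (u 1 - u 0)
  obtain ⟨y, hy⟩ := cauchySeq_tendsto_of_complete
    (NonarchimedeanAddGroup.cauchySeq_of_tendsto_sub_nhds_zero (tendsto_zero_of_v_le hpow hstep))
  refine ⟨y, tendsto_nhds_unique ((hT.tendsto y).comp hy) ?_⟩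
  simpa only [Function.comp_def, ← hsucc] using hy.comp (tendsto_add_atTop_nat 1)

theorem exists_isRoot_of_v_coeff_zero_lt_one
    {f : F[X]} (hf : ∀ i, v (f.coeff i) ≤ 1) (h0 : v (f.coeff 0) < 1) (h1 : v (f.coeff 1) = 1) :
    ∃ x, f.IsRoot x := by
  have hf1 : f.coeff 1 ≠ 0 := fun h => by simp [h] at h1
  set T : F → F := fun x => x - f.eval x / f.coeff 1
  -- Newton's iteration with the slope frozen at `f.coeff 1`: a contraction on the disc of radius
  -- `v (f.coeff 0)`.
  have hT : ∀ x y, v (T x - T y) = v (f.eval x - f.eval y - f.coeff 1 * (x - y)) := by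
    intro x y
    rw [show T x - T y = -(f.eval x - f.eval y - f.coeff 1 * (x - y)) / f.coeff 1 by
      simp only [T]; field_simp; ring, map_div₀, Valuation.map_neg, h1, div_one]
  have hS : Set.MapsTo T {x | v x ≤ v (f.coeff 0)} {x | v x ≤ v (f.coeff 0)} := by
    intro x (hx : v x ≤ _)
    have hT0 : v (T 0) = v (f.coeff 0) := by
      simp [T, Polynomial.coeff_zero_eq_eval_zero, h1]
    have hdiff := (hT x 0).trans_le
      (v.map_eval_sub_eval_sub_le hf h0.le hx (by simp))
    rw [sub_zero] at hdiff
    calc v (T x) = v ((T x - T 0) + T 0) := by rw [sub_add_cancel]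
      _ ≤ max (v (T x - T 0)) (v (T 0)) := v.map_add _ _
      _ ≤ v (f.coeff 0) := max_le (hdiff.trans (mul_le_of_le_one_right' (hx.trans h0.le)))
          hT0.le
  obtain ⟨y, hy⟩ := exists_isFixedPt_of_contracting (by fun_prop) hS (x₀ := 0) (by simp) h0
    fun x hx y hy => (hT x y).trans_le (v.map_eval_sub_eval_sub_le hf h0.le hx hy)
  exact ⟨y, by simpa [T, Function.IsFixedPt, hf1] using hy⟩

end Valued

theorem Ideal.natCast_notMem_of_not_exists_card_eq_pow {R : Type*} [CommRing R] {m : Ideal R}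
    [m.IsMaximal] [Finite (R ⧸ m)] {p : ℕ} (hp : p.Prime)
    (h : ¬∃ n : ℕ, Nat.card (R ⧸ m) = p ^ n) : (p : R) ∉ m := by
  intro hpm
  let := Ideal.Quotient.field m
  have : CharP (R ⧸ m) p := (CharP.charP_iff_prime_eq_zero hp).mpr <| by
    rw [← map_natCast (Ideal.Quotient.mk m), Ideal.Quotient.eq_zero_iff_mem]; exact hpm
  let := Fintype.ofFinite (R ⧸ m)
  obtain ⟨n, -, hn⟩ := FiniteField.card (R ⧸ m) p
  exact h ⟨n, by rw [Nat.card_eq_fintype_card, hn]⟩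

namespace IsDedekindDomain.HeightOneSpectrum

theorem intValuation_ringEquiv {R : Type*} [CommRing R] [IsDedekindDomain R]
    (v : HeightOneSpectrum R) (σ : R ≃+* R) (hσ : v.asIdeal.map σ = v.asIdeal) (r : R) :
    v.intValuation (σ r) = v.intValuation r := by
  rcases eq_or_ne r 0 with rfl | hr
  · rw [map_zero]
  let σI : Ideal R ≃* Ideal R :=
    { Ideal.mapHom (σ : R →+* R) with
      invFun := Ideal.map (σ.symm : R →+* R)
      left_inv := fun I => Ideal.map_of_equiv σ
      right_inv := fun I => by simpa using Ideal.map_of_equiv σ.symm (I := I) }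
  have hspan : Ideal.span {σ r} = σI (Ideal.span {r}) := by
    simp [σI, Ideal.map_span]
  have hmult : multiplicity v.asIdeal (σI (Ideal.span {r})) =
      multiplicity v.asIdeal (Ideal.span {r}) := by
    conv_lhs => rw [← hσ]
    exact multiplicity_map_eq σI
  rw [intValuation_eq_exp_neg_multiplicity v hr,
    intValuation_eq_exp_neg_multiplicity v (by simpa using hr), hspan, hmult]

section Extension

variable {A B : Type*} [CommRing A] [CommRing B] [Algebra A B] (v : HeightOneSpectrum A)
  (w : HeightOneSpectrum B) {e : ℕ}

theorem liesOver_of_map_eq_pow [IsDedekindDomain A]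
    (hw : v.asIdeal.map (algebraMap A B) = w.asIdeal ^ e) (he : e ≠ 0) :
    w.asIdeal.LiesOver v.asIdeal := by
  have hle : v.asIdeal ≤ w.asIdeal.under A := by
    rw [Ideal.under_def, ← Ideal.map_le_iff_le_comap, hw]
    exact Ideal.pow_le_self he
  exact ⟨v.isMaximal.eq_of_le (Ideal.IsPrime.comap _).ne_top hle⟩

theorem ramificationIdx'_eq_of_map_eq_pow [IsDedekindDomain B]
    (hw : v.asIdeal.map (algebraMap A B) = w.asIdeal ^ e) :
    v.asIdeal.ramificationIdx' w.asIdeal = e :=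
  Ideal.ramificationIdx'_spec hw.le (hw ▸ (Ideal.pow_succ_lt_pow w.ne_bot e).not_ge)

end Extension

section NumberField

variable {K L : Type*} [Field K] [NumberField K] [Field L] [NumberField L] [Algebra K L]
  (v : HeightOneSpectrum (𝓞 K)) (w : HeightOneSpectrum (𝓞 L)) {e : ℕ}

theorem valuation_algebraMap_eq_pow
    (hw : v.asIdeal.map (algebraMap (𝓞 K) (𝓞 L)) = w.asIdeal ^ e) (he : e ≠ 0) (x : K) :
    w.valuation L (algebraMap K L x) = v.valuation K x ^ e := by
  have := liesOver_of_map_eq_pow v w hw he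
  rw [← valuation_liesOver L v w, ramificationIdx'_eq_of_map_eq_pow v w hw]

theorem map_galRestrict_eq_of_map_eq_pow
    (hw : v.asIdeal.map (algebraMap (𝓞 K) (𝓞 L)) = w.asIdeal ^ e) (he : e ≠ 0)
    (σ : L ≃ₐ[K] L) : w.asIdeal.map (galRestrict (𝓞 K) K L (𝓞 L) σ) = w.asIdeal := by
  set τ := galRestrict (𝓞 K) K L (𝓞 L) σ
  have hpow : w.asIdeal.map τ ^ e = w.asIdeal ^ e := by
    rw [← Ideal.map_pow, ← hw]
    change Ideal.map (τ : 𝓞 L →+* 𝓞 L) _ = _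
    rw [Ideal.map_map]
    exact congrArg (Ideal.map · v.asIdeal) τ.toAlgHom.comp_algebraMap
  have hprime : (w.asIdeal.map τ).IsPrime := Ideal.map_isPrime_of_equiv τ
  have hne : w.asIdeal.map τ ≠ ⊥ := by
    rw [Ne, Ideal.map_eq_bot_iff_of_injective τ.injective]; exact w.ne_bot
  have hle : w.asIdeal.map τ ≤ w.asIdeal :=
    w.isPrime.le_of_pow_le (hpow.le.trans (Ideal.pow_le_self he))
  exact (hprime.isMaximal hne).eq_of_le w.isPrime.ne_top hle

theorem valuation_algEquiv_apply
    (hw : v.asIdeal.map (algebraMap (𝓞 K) (𝓞 L)) = w.asIdeal ^ e) (he : e ≠ 0) (σ : L ≃ₐ[K] L)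
    (x : L) : w.valuation L (σ x) = w.valuation L x := by
  obtain ⟨p, q, -, rfl⟩ := IsFractionRing.div_surjective (A := 𝓞 L) x
  have hτ := intValuation_ringEquiv w (galRestrict (𝓞 K) K L (𝓞 L) σ : 𝓞 L ≃+* 𝓞 L)
    (map_galRestrict_eq_of_map_eq_pow v w hw he σ)
  simp only [map_div₀, ← algebraMap_galRestrict_apply (𝓞 K), valuation_of_algebraMap]
  exact congrArg₂ (· / ·) (hτ p) (hτ q)

theorem valuation_coeff_of_map_eq_prod
    (hw : v.asIdeal.map (algebraMap (𝓞 K) (𝓞 L)) = w.asIdeal ^ e) (he : e ≠ 0) {a b : L}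
    (ha : w.valuation L a ≤ 1) (hb : w.valuation L b < 1) {h : K[X]}
    (hh : h.map (algebraMap K L) =
      ∏ σ : L ≃ₐ[K] L, (Polynomial.C (σ a) * Polynomial.X + Polynomial.C (σ b))) (j : ℕ) :
    v.valuation K (h.coeff j) ≤ 1 ∧
      (j < Fintype.card (L ≃ₐ[K] L) → v.valuation K (h.coeff j) < 1) := by
  have := (w.valuation L).map_coeff_prod_C_mul_X_add_C Finset.univ
    (fun σ _ => (valuation_algEquiv_apply v w hw he σ a).trans_le ha)
    (fun σ _ => (valuation_algEquiv_apply v w hw he σ b).trans_lt hb) j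
  rwa [← hh, Polynomial.coeff_map, valuation_algebraMap_eq_pow v w hw he, pow_le_one_iff he,
    pow_lt_one_iff he, Finset.card_univ] at this

theorem exists_aeval_eq_mul_of_valuation_coeff {h : K[X]}
    (hh : ∀ j, v.valuation K (h.coeff j) ≤ 1) (h0 : v.valuation K (h.coeff 0) < 1)
    (h1 : v.valuation K (h.coeff 1) < 1) {s : K} (hs : v.valuation K s = 1) :
    ∃ x : v.adicCompletion K, Polynomial.aeval x h = algebraMap K _ s * x := by
  have hv : ∀ z : K, Valued.v (algebraMap K (v.adicCompletion K) z) = v.valuation K z :=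
    v.valuedAdicCompletion_eq_valuation'
  have hcoeff : ∀ j, (h - Polynomial.C s * Polynomial.X).coeff j =
      h.coeff j - if j = 1 then s else 0 := fun j => by
    rw [Polynomial.coeff_sub, Polynomial.coeff_C_mul_X]
  obtain ⟨x, hx⟩ := Valued.exists_isRoot_of_v_coeff_zero_lt_one
    (f := (h - Polynomial.C s * Polynomial.X).map (algebraMap K (v.adicCompletion K)))
    (fun j => by
      rw [Polynomial.coeff_map, hv, hcoeff]
      split_ifs
      · exact (Valuation.map_sub _ _ _).trans (max_le (hh j) hs.le)
      · rw [sub_zero]; exact hh j)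
    (by rw [Polynomial.coeff_map, hv, hcoeff, if_neg one_ne_zero.symm, sub_zero]; exact h0)
    (by rw [Polynomial.coeff_map, hv, hcoeff, if_pos rfl, Valuation.map_sub_swap,
      Valuation.map_sub_eq_of_lt_left _ (hs ▸ h1), hs])
  refine ⟨x, ?_⟩
  rw [Polynomial.IsRoot, Polynomial.eval_map_algebraMap, map_sub, sub_eq_zero] at hx
  simpa using hx

end NumberField

end IsDedekindDomain.HeightOneSpectrum

section LineRestriction

variable {R : Type*} [CommRing R]

noncomputable def lineRestriction (P : MvPolynomial (Fin 4) R) (s : R) : R[X] :=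
  aeval ![Polynomial.X, 1, Polynomial.C s, 0] P

theorem aeval_lineRestriction {S : Type*} [CommRing S] [Algebra R S] (P : MvPolynomial (Fin 4) R)
    (s : R) (x : S) :
    Polynomial.aeval x (lineRestriction P s) = aeval ![x, 1, algebraMap R S s, 0] P := by
  rw [lineRestriction, comp_aeval_apply]
  congr
  funext i
  fin_cases i <;> simp

theorem map_lineRestriction {S : Type*} [CommRing S] [Algebra R S] (P : MvPolynomial (Fin 4) R)
    (s : R) : (lineRestriction P s).map (algebraMap R S) =
      lineRestriction (MvPolynomial.map (algebraMap R S) P) (algebraMap R S s) := by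
  rw [lineRestriction, lineRestriction, ← Polynomial.mapAlg_eq_map, comp_aeval_apply,
    aeval_map_algebraMap]
  congr
  funext i
  fin_cases i <;> simp [Polynomial.mapAlg_eq_map]

end LineRestriction

theorem map_lineRestriction_eq_prod {K L : Type*} [Field K] [Field L] [Algebra K L]
    [Fintype (L ≃ₐ[K] L)] {a b c d : L} {P : MvPolynomial (Fin 4) K}
    (hP : MvPolynomial.map (algebraMap K L) P =
      ∏ σ : L ≃ₐ[K] L, (C (σ a) * X 0 + C (σ b) * X 1 + C (σ c) * X 2 + C (σ d) * X 3)) (s : K) :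
    (lineRestriction P s).map (algebraMap K L) = ∏ σ : L ≃ₐ[K] L,
      (Polynomial.C (σ a) * Polynomial.X + Polynomial.C (σ (b + algebraMap K L s * c))) := by
  rw [map_lineRestriction, hP, lineRestriction, map_prod]
  refine Finset.prod_congr rfl fun σ _ => ?_
  simp only [map_add, map_mul, aeval_C, aeval_X, AlgEquiv.commutes, Polynomial.algebraMap_eq,
    Fin.isValue, Matrix.cons_val_zero, Matrix.cons_val_one, Matrix.cons_val, mul_one, mul_zero,
    add_zero]
  ring

open IsDedekindDomain.HeightOneSpectrum in
theorem ramified_prime_local_solubility_general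
    {K : Type*} [Field K] [NumberField K]
    {L : Type*} [Field L] [NumberField L] [Algebra K L] [IsGalois K L]
    (hdeg : Module.finrank K L = 3)
    (v : HeightOneSpectrum (𝓞 K)) (w : HeightOneSpectrum (𝓞 L))
    (hw : Ideal.map (algebraMap (𝓞 K) (𝓞 L)) v.asIdeal = w.asIdeal ^ 3)
    (hq : ¬∃ n : ℕ, Nat.card (𝓞 K ⧸ v.asIdeal) = 3 ^ n)
    (α : 𝓞 K ⧸ v.asIdeal) (hα : α ≠ 0)
    (a b c d : L)
    (ha0 : w.valuation L a ≤ 1)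
    -- b ≡ 1/3 (mod 𝔓)
    (hb : w.valuation L (3 * b - 1) < 1)
    -- c ≡ 1/(3α) (mod 𝔓)
    (hc : ∃ A : 𝓞 K, Ideal.Quotient.mk v.asIdeal A = α ∧
      w.valuation L (3 * algebraMap K L (algebraMap (𝓞 K) K A) * c - 1) < 1)
    -- P is the norm form N_{L/K}(aT0 + bT1 + cT2 + dT3), a cubic form over K
    (P : MvPolynomial (Fin 4) K)
    (hP : MvPolynomial.map (algebraMap K L) P =
      ∏ σ : L ≃ₐ[K] L, (C (σ a) * X 0 + C (σ b) * X 1 + C (σ c) * X 2 + C (σ d) * X 3)) :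
    ∃ t : Fin 4 → v.adicCompletion K, t ≠ 0 ∧ t 0 * t 1 * t 2 = aeval t P := by
  obtain ⟨A, hAα, hAc⟩ := hc
  set s : K := -algebraMap (𝓞 K) K A
  have hs : v.valuation K s = 1 := by
    rw [Valuation.map_neg, valuation_eq_one_iff_notMem]
    exact fun hA => hα (hAα ▸ Ideal.Quotient.eq_zero_iff_mem.mpr hA)
  have h3 : w.valuation L 3 = 1 := by
    rw [← map_ofNat (algebraMap K L), valuation_algebraMap_eq_pow v w hw three_ne_zero,
      ← map_ofNat (algebraMap (𝓞 K) K), (v.valuation_eq_one_iff_notMem).mpr, one_pow]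
    exact_mod_cast Ideal.natCast_notMem_of_not_exists_card_eq_pow Nat.prime_three hq
  have he : w.valuation L (b + algebraMap K L s * c) < 1 := by
    have h3e : 3 * (b + algebraMap K L s * c) =
        (3 * b - 1) - (3 * algebraMap K L (algebraMap (𝓞 K) K A) * c - 1) := by
      simp only [s, map_neg]; ring
    have h3lt : w.valuation L (3 * (b + algebraMap K L s * c)) < 1 := by
      rw [h3e]; exact (Valuation.map_sub _ _ _).trans_lt (max_lt hb hAc)
    rwa [map_mul, h3, one_mul] at h3lt
  have hcard : Fintype.card (L ≃ₐ[K] L) = 3 := by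
    rw [← Nat.card_eq_fintype_card, IsGalois.card_aut_eq_finrank, hdeg]
  have hcoeff := valuation_coeff_of_map_eq_prod v w hw three_ne_zero ha0 he
    (map_lineRestriction_eq_prod hP s)
  obtain ⟨x, hx⟩ := exists_aeval_eq_mul_of_valuation_coeff v (fun j => (hcoeff j).1)
    ((hcoeff 0).2 (by omega)) ((hcoeff 1).2 (by omega)) hs
  refine ⟨![x, 1, algebraMap K _ s, 0], fun h => by simpa using congrFun h 1, ?_⟩
  rw [← aeval_lineRestriction, hx]
  simp [mul_comm]

/-- **Proposition (ramified primes, part a).**  Let `𝔩 = v` be a prime of `O_K` ramified in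
the cyclic cubic extension `L/K`, say `𝔩 O_L = 𝔓³` with `𝔓 = w`, and suppose
`ℓ = #(O_K/𝔩)` is not a power of `3`.  Let `α ∈ (O_K/𝔩)^*` and let `a, b, c, d ∈ L` be
`𝔓`-integral with residues `a ≡ α/3`, `b ≡ 1/3`, `c ≡ 1/(3α) (mod 𝔓)` (equivalently
`3a ≡ α`, `3b ≡ 1`, `3αc ≡ 1`), and `ν_𝔓(d) ∈ {1, 2}`.  Then the cubic surface
`T0T1T2 = N_{L/K}(aT0 + bT1 + cT2 + dT3)` (with defining norm form `P` over `K`) has a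
`K_𝔩`-rational point. -/
theorem ramified_prime_local_solubility
    {K : Type*} [Field K] [NumberField K]
    {L : Type*} [Field L] [NumberField L] [Algebra K L] [IsGalois K L]
    [FiniteDimensional K L] (hdeg : Module.finrank K L = 3)
    (v : HeightOneSpectrum (𝓞 K)) (w : HeightOneSpectrum (𝓞 L))
    (hw : Ideal.map (algebraMap (𝓞 K) (𝓞 L)) v.asIdeal = w.asIdeal ^ 3)
    (hq : ¬∃ n : ℕ, Nat.card (𝓞 K ⧸ v.asIdeal) = 3 ^ n)
    (α : 𝓞 K ⧸ v.asIdeal) (hα : α ≠ 0)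
    (a b c d : L)
    (ha0 : w.valuation L a ≤ 1) (hb0 : w.valuation L b ≤ 1) (hc0 : w.valuation L c ≤ 1)
    -- a ≡ α/3 (mod 𝔓), via the isomorphism O_L/𝔓 ≅ O_K/𝔩
    (ha : ∃ A : 𝓞 K, Ideal.Quotient.mk v.asIdeal A = α ∧
      w.valuation L (3 * a - algebraMap K L (algebraMap (𝓞 K) K A)) < 1)
    -- b ≡ 1/3 (mod 𝔓)
    (hb : w.valuation L (3 * b - 1) < 1)
    -- c ≡ 1/(3α) (mod 𝔓)
    (hc : ∃ A : 𝓞 K, Ideal.Quotient.mk v.asIdeal A = α ∧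
      w.valuation L (3 * algebraMap K L (algebraMap (𝓞 K) K A) * c - 1) < 1)
    -- ν_𝔓(d) ∈ {1, 2}
    (hd : w.valuation L d = ((Multiplicative.ofAdd (-1 : ℤ) : Multiplicative ℤ) : WithZero (Multiplicative ℤ)) ∨
          w.valuation L d = ((Multiplicative.ofAdd (-2 : ℤ) : Multiplicative ℤ) : WithZero (Multiplicative ℤ)))
    -- P is the norm form N_{L/K}(aT0 + bT1 + cT2 + dT3), a cubic form over K
    (P : MvPolynomial (Fin 4) K)
    (hP : MvPolynomial.map (algebraMap K L) P =
      ∏ σ : L ≃ₐ[K] L, (C (σ a) * X 0 + C (σ b) * X 1 + C (σ c) * X 2 + C (σ d) * X 3)) :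
    ∃ t : Fin 4 → v.adicCompletion K, t ≠ 0 ∧ t 0 * t 1 * t 2 = aeval t P :=
  ramified_prime_local_solubility_general hdeg v w hw hq α hα a b c d ha0 hb hc P hP
end
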